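/- Let A be a real C*-algebra, H a finite-dimensional A-bimodule, J an antiunitary on H with J² = ε (ε = ±1), ρ(a) = Jλ(a*)J* for all a ∈ A, and let εʹ = ±1. Define R(M) = M + εʹ J M J* for M a right A-linear self-adjoint operator on H. Then: (1) R(M) is a self-adjoint operator satisfying the order-one condition [[R(M), λ(a)], ρ(b)] = 0 for all a, b ∈ A and J R(M) = εʹ R(M) J; (2) every self-adjoint D satisfying the order-one condition together with DJ = εʹ JD lies in the image of R; (3) ker R consists of operators that are both left and right A-linear. -/

import Mathlib

/-!
Conjugation by `J`, `M ↦ U M̄ Uᴴ`, is a conjugate-linear ring automorphism commuting with `ᴴ`;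
it is involutive because `U Ū` is a unitary scalar. By the definition of `ρ` it exchanges
`λ(a)` and `ρ(a*)`, hence the commutants of `λ(A)` and of `ρ(A)`. This gives (1) and (3) at once.

For (2), the order-zero and order-one conditions put `ρ(a)` and `[D, ρ(a)]` in the commutant `B`
of `λ(A)`. The orthogonal projection `E` onto `B` for the Hilbert–Schmidt inner product is a
`B`-bimodule map, so `[D, ρ(a)] = E [D, ρ(a)] = [E D, ρ(a)]`, i.e. `D - E D` is right linear.
Then `M = ½ (D - E D + ε' J (E D) J*)` is self-adjoint, right linear, and `R(M) = D`.
-/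

open Matrix

/-- Conjugation of a matrix by the antiunitary J = U ∘ (complex conjugation):
J M J* corresponds to U M̄ Uᴴ. -/
noncomputable def conjJ (d : ℕ) (U M : Matrix (Fin d) (Fin d) ℂ) :
    Matrix (Fin d) (Fin d) ℂ :=
  U * M.map (starRingEnd ℂ) * Uᴴ

open scoped ComplexOrder

namespace Matrix

variable {𝕜 n : Type*} [RCLike 𝕜] [Fintype n] [DecidableEq n]

noncomputable local instance : NormedAddCommGroup (Matrix n n 𝕜) :=
  toMatrixNormedAddCommGroup 1 PosDef.one

noncomputable local instance : InnerProductSpace 𝕜 (Matrix n n 𝕜) :=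
  toMatrixInnerProductSpace 1 PosSemidef.one

private lemma inner_eq_trace (X Y : Matrix n n 𝕜) : inner 𝕜 X Y = (Y * Xᴴ).trace := by
  change (Y * 1 * Xᴴ).trace = _
  rw [Matrix.mul_one]

private lemma inner_mul_left_eq (b X Y : Matrix n n 𝕜) :
    inner 𝕜 (b * X) Y = inner 𝕜 X (bᴴ * Y) := by
  rw [inner_eq_trace, inner_eq_trace, conjTranspose_mul, ← Matrix.mul_assoc, trace_mul_cycle]

private lemma inner_mul_right_eq (b X Y : Matrix n n 𝕜) :
    inner 𝕜 (X * b) Y = inner 𝕜 X (Y * bᴴ) := by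
  rw [inner_eq_trace, inner_eq_trace, conjTranspose_mul, Matrix.mul_assoc]

private lemma inner_conjTranspose_left_eq (X Y : Matrix n n 𝕜) :
    inner 𝕜 Xᴴ Y = star (inner 𝕜 X Yᴴ) := by
  rw [inner_eq_trace, inner_eq_trace, ← trace_conjTranspose, conjTranspose_mul,
    conjTranspose_conjTranspose, conjTranspose_conjTranspose, trace_mul_comm]

/-- The conditional expectation onto `B`: the orthogonal projection for the Hilbert–Schmidt
inner product `⟪X, Y⟫ = tr (Y Xᴴ)`. For `B` the commutant of `λ(A)` it is the paper's `E_λ`. -/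
noncomputable def condExp (B : StarSubalgebra 𝕜 (Matrix n n 𝕜)) (X : Matrix n n 𝕜) :
    Matrix n n 𝕜 :=
  (Subalgebra.toSubmodule B.toSubalgebra).starProjection X

variable {B : StarSubalgebra 𝕜 (Matrix n n 𝕜)}

lemma condExp_mem (X : Matrix n n 𝕜) : condExp B X ∈ B :=
  Submodule.starProjection_apply_mem (Subalgebra.toSubmodule B.toSubalgebra) X

lemma condExp_of_mem {X : Matrix n n 𝕜} (hX : X ∈ B) : condExp B X = X :=
  Submodule.starProjection_eq_self_iff.mpr hX

lemma condExp_sub (X Y : Matrix n n 𝕜) : condExp B (X - Y) = condExp B X - condExp B Y :=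
  map_sub _ X Y

private lemma inner_sub_condExp (X : Matrix n n 𝕜) {Y : Matrix n n 𝕜} (hY : Y ∈ B) :
    inner 𝕜 (X - condExp B X) Y = 0 :=
  Submodule.starProjection_inner_eq_zero X Y hY

private lemma condExp_eq_of_mem {X Y : Matrix n n 𝕜} (hY : Y ∈ B)
    (h : ∀ W ∈ B, inner 𝕜 (X - Y) W = 0) : condExp B X = Y :=
  Submodule.eq_starProjection_of_mem_of_inner_eq_zero hY h

lemma condExp_conjTranspose (X : Matrix n n 𝕜) : condExp B Xᴴ = (condExp B X)ᴴ := by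
  refine condExp_eq_of_mem (star_mem (condExp_mem X)) fun W hW => ?_
  have hW' : Wᴴ ∈ B := star_mem hW
  rw [← conjTranspose_sub, inner_conjTranspose_left_eq, inner_sub_condExp X hW', star_zero]

lemma condExp_mul_left {b : Matrix n n 𝕜} (hb : b ∈ B) (X : Matrix n n 𝕜) :
    condExp B (b * X) = b * condExp B X := by
  refine condExp_eq_of_mem (mul_mem hb (condExp_mem X)) fun W hW => ?_
  rw [← Matrix.mul_sub, inner_mul_left_eq]
  exact inner_sub_condExp X (mul_mem (star_mem hb) hW)

lemma condExp_mul_right {b : Matrix n n 𝕜} (hb : b ∈ B) (X : Matrix n n 𝕜) :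
    condExp B (X * b) = condExp B X * b := by
  refine condExp_eq_of_mem (mul_mem (condExp_mem X) hb) fun W hW => ?_
  rw [← Matrix.sub_mul, inner_mul_right_eq]
  exact inner_sub_condExp X (mul_mem hW (star_mem hb))

theorem exists_isHermitian_mem_forall_commute_sub (B : StarSubalgebra 𝕜 (Matrix n n 𝕜))
    {D : Matrix n n 𝕜} (hD : D.IsHermitian) :
    ∃ P ∈ B, P.IsHermitian ∧ ∀ b ∈ B, D * b - b * D ∈ B → Commute (D - P) b := by
  refine ⟨condExp B D, condExp_mem D, ?_, fun b hb hDb => ?_⟩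
  · rw [IsHermitian, ← condExp_conjTranspose, hD.eq]
  · have h := condExp_of_mem hDb
    rw [condExp_sub, condExp_mul_left hb, condExp_mul_right hb] at h
    rw [Commute, SemiconjBy, sub_mul, mul_sub, sub_eq_sub_iff_sub_eq_sub, h]

end Matrix

section conjJ

variable {d : ℕ} {U : Matrix (Fin d) (Fin d) ℂ}

private lemma conjTranspose_map_conj (M : Matrix (Fin d) (Fin d) ℂ) :
    Mᴴ.map (starRingEnd ℂ) = (M.map (starRingEnd ℂ))ᴴ :=
  conjTranspose_map _ fun _ => rfl

theorem conjJ_add (M N : Matrix (Fin d) (Fin d) ℂ) :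
    conjJ d U (M + N) = conjJ d U M + conjJ d U N := by
  simp only [conjJ, ← RingHom.mapMatrix_apply, map_add, Matrix.mul_add, Matrix.add_mul]

theorem conjJ_sub (M N : Matrix (Fin d) (Fin d) ℂ) :
    conjJ d U (M - N) = conjJ d U M - conjJ d U N := by
  simp only [conjJ, ← RingHom.mapMatrix_apply, map_sub, Matrix.mul_sub, Matrix.sub_mul]

theorem conjJ_smul (c : ℂ) (M : Matrix (Fin d) (Fin d) ℂ) :
    conjJ d U (c • M) = starRingEnd ℂ c • conjJ d U M := by
  rw [conjJ, conjJ, Matrix.map_smul' _ c M (map_mul _), Matrix.mul_smul, Matrix.smul_mul]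

theorem conjJ_conjTranspose (M : Matrix (Fin d) (Fin d) ℂ) :
    conjJ d U Mᴴ = (conjJ d U M)ᴴ := by
  simp only [conjJ, conjTranspose_map_conj, conjTranspose_mul, conjTranspose_conjTranspose,
    Matrix.mul_assoc]

theorem conjJ_mul (hU : U ∈ unitaryGroup (Fin d) ℂ) (M N : Matrix (Fin d) (Fin d) ℂ) :
    conjJ d U (M * N) = conjJ d U M * conjJ d U N := by
  have hUU : Uᴴ * U = 1 := mem_unitaryGroup_iff'.mp hU
  simp only [conjJ, ← RingHom.mapMatrix_apply, map_mul, Matrix.mul_assoc]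
  rw [← Matrix.mul_assoc Uᴴ, hUU, Matrix.one_mul]

theorem Commute.conjJ (hU : U ∈ unitaryGroup (Fin d) ℂ) {M N : Matrix (Fin d) (Fin d) ℂ}
    (h : Commute M N) : Commute (conjJ d U M) (conjJ d U N) := by
  rw [Commute, SemiconjBy, ← conjJ_mul hU, ← conjJ_mul hU, h.eq]

theorem conjJ_conjJ (hU : U ∈ unitaryGroup (Fin d) ℂ) {c : ℂ}
    (hJ2 : U * U.map (starRingEnd ℂ) = c • 1) (M : Matrix (Fin d) (Fin d) ℂ) :
    conjJ d U (conjJ d U M) = M := by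
  set V := U * U.map (starRingEnd ℂ)
  have hV : V * Vᴴ = 1 :=
    mem_unitaryGroup_iff.mp (mul_mem hU (map_star_mem_unitaryGroup_iff.mpr hU))
  have hVM : V * M = M * V := by
    rw [hJ2, smul_mul_assoc, mul_smul_comm, Matrix.one_mul, Matrix.mul_one]
  calc conjJ d U (conjJ d U M) = V * M * Vᴴ := by
        simp only [conjJ, V, Matrix.map_mul, Matrix.map_map, Function.comp_def,
          starRingEnd_self_apply, Matrix.map_id', conjTranspose_mul, Matrix.mul_assoc,
          conjTranspose_map_conj]
    _ = M := by rw [hVM, Matrix.mul_assoc, hV, Matrix.mul_one]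

end conjJ

theorem Commute.commutator_swap {R : Type*} [Ring R] {D x y : R} (hxy : Commute x y)
    (h : Commute (D * x - x * D) y) : Commute (D * y - y * D) x := by
  have jacobi : (D * y - y * D) * x - x * (D * y - y * D) =
      ((D * x - x * D) * y - y * (D * x - x * D)) + D * (y * x - x * y) +
        (x * y - y * x) * D := by
    noncomm_ring
  rw [Commute, SemiconjBy, ← sub_eq_zero, jacobi, sub_eq_zero.mpr h.eq, hxy.eq, sub_self,
    mul_zero, zero_mul, add_zero, add_zero]

def OrderOne {A R : Type*} [Ring R] (lam rho : A → R) (D : R) : Prop :=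
  ∀ a b, Commute (D * lam a - lam a * D) (rho b)

/-- The paper's `R(M) = M + ε' J M J*`. -/
noncomputable def jSymm (d : ℕ) (U : Matrix (Fin d) (Fin d) ℂ) (ε' : ℝ)
    (M : Matrix (Fin d) (Fin d) ℂ) : Matrix (Fin d) (Fin d) ℂ :=
  M + (ε' : ℂ) • conjJ d U M

section jSymm

variable {A : Type*} [Semiring A] [InvolutiveStar A] [Algebra ℝ A] {d : ℕ}
  {U : Matrix (Fin d) (Fin d) ℂ} {c : ℂ} {ε' : ℝ}
  {lam : A →⋆ₐ[ℝ] Matrix (Fin d) (Fin d) ℂ} {rho : A → Matrix (Fin d) (Fin d) ℂ}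

theorem commute_conjJ_rho (hrho : ∀ a, rho a = conjJ d U (lam (star a)))
    (hU : U ∈ unitaryGroup (Fin d) ℂ) {M : Matrix (Fin d) (Fin d) ℂ}
    (hM : ∀ a, Commute M (lam a)) (a : A) : Commute (conjJ d U M) (rho a) :=
  hrho a ▸ (hM (star a)).conjJ hU

theorem commute_conjJ_lam (hrho : ∀ a, rho a = conjJ d U (lam (star a)))
    (hU : U ∈ unitaryGroup (Fin d) ℂ) (hJ2 : U * U.map (starRingEnd ℂ) = c • 1)
    {M : Matrix (Fin d) (Fin d) ℂ} (hM : ∀ a, Commute M (rho a)) (a : A) :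
    Commute (conjJ d U M) (lam a) := by
  simpa only [hrho, star_star, conjJ_conjJ hU hJ2] using (hM (star a)).conjJ hU

theorem isHermitian_jSymm {M : Matrix (Fin d) (Fin d) ℂ} (hM : M.IsHermitian) :
    (jSymm d U ε' M).IsHermitian := by
  simp only [IsHermitian, jSymm, conjTranspose_add, conjTranspose_smul, ← conjJ_conjTranspose,
    hM.eq, Complex.star_def, Complex.conj_ofReal]

theorem conjJ_jSymm (hU : U ∈ unitaryGroup (Fin d) ℂ) (hJ2 : U * U.map (starRingEnd ℂ) = c • 1)
    (hε' : ε' * ε' = 1) (M : Matrix (Fin d) (Fin d) ℂ) :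
    conjJ d U (jSymm d U ε' M) = (ε' : ℂ) • jSymm d U ε' M := by
  have hε'ℂ : (ε' : ℂ) * ε' = 1 := mod_cast hε'
  rw [jSymm, conjJ_add, conjJ_smul, conjJ_conjJ hU hJ2, Complex.conj_ofReal, smul_add, smul_smul,
    hε'ℂ, one_smul, add_comm]

theorem orderOne_jSymm (hrho : ∀ a, rho a = conjJ d U (lam (star a)))
    (hU : U ∈ unitaryGroup (Fin d) ℂ) (hJ2 : U * U.map (starRingEnd ℂ) = c • 1)
    (horder0 : ∀ a b, Commute (lam a) (rho b)) {M : Matrix (Fin d) (Fin d) ℂ}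
    (hM : ∀ a, Commute M (rho a)) : OrderOne lam rho (jSymm d U ε' M) := by
  intro a b
  have hJM : Commute (conjJ d U M) (lam a) := commute_conjJ_lam hrho hU hJ2 hM a
  have hcomm : jSymm d U ε' M * lam a - lam a * jSymm d U ε' M = M * lam a - lam a * M := by
    rw [jSymm, add_mul, mul_add, smul_mul_assoc, mul_smul_comm, hJM.eq]
    abel
  rw [hcomm]
  exact ((hM b).mul_left (horder0 a b)).sub_left ((horder0 a b).mul_left (hM b))

theorem exists_jSymm_eq (hrho : ∀ a, rho a = conjJ d U (lam (star a)))
    (hU : U ∈ unitaryGroup (Fin d) ℂ) (hJ2 : U * U.map (starRingEnd ℂ) = c • 1)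
    (hε' : ε' * ε' = 1) (horder0 : ∀ a b, Commute (lam a) (rho b))
    {D : Matrix (Fin d) (Fin d) ℂ} (hD : D.IsHermitian) (hD1 : OrderOne lam rho D)
    (hDJ : conjJ d U D = (ε' : ℂ) • D) :
    ∃ M, M.IsHermitian ∧ (∀ a, Commute M (rho a)) ∧ D = jSymm d U ε' M := by
  set B := StarSubalgebra.centralizer ℂ (Set.range lam)
  have mem_B {X} (hX : ∀ b, Commute X (lam b)) : X ∈ B := by
    refine (StarSubalgebra.mem_centralizer_iff ℂ).mpr ?_
    rintro _ ⟨b, rfl⟩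
    exact ⟨(hX b).symm.eq, by rw [← map_star]; exact (hX (star b)).symm.eq⟩
  obtain ⟨P, hPB, hP, hDP⟩ := Matrix.exists_isHermitian_mem_forall_commute_sub B hD
  have hPlam (b : A) : Commute P (lam b) :=
    ((StarSubalgebra.mem_centralizer_iff ℂ).mp hPB (lam b) ⟨b, rfl⟩).1.symm
  have hDPrho (a : A) : Commute (D - P) (rho a) :=
    hDP _ (mem_B fun b => (horder0 b a).symm)
      (mem_B fun b => (horder0 b a).commutator_swap (hD1 b a))
  -- `ε' J P J* = E_ρ D`, so this `M` is the paper's `½ (Id - E_λ + E_ρ) D`.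
  refine ⟨(2⁻¹ : ℂ) • (D - P + (ε' : ℂ) • conjJ d U P), ?_, fun a => ?_, ?_⟩
  · simp only [IsHermitian, conjTranspose_smul, conjTranspose_add, conjTranspose_sub,
      ← conjJ_conjTranspose, hD.eq, hP.eq, star_inv₀, star_ofNat, Complex.star_def,
      Complex.conj_ofReal]
  · exact ((hDPrho a).add_left ((commute_conjJ_rho hrho hU hPlam a).smul_left _)).smul_left _
  · have hε'ℂ : (ε' : ℂ) * ε' = 1 := mod_cast hε'
    rw [jSymm, conjJ_smul, conjJ_add, conjJ_sub, conjJ_smul, conjJ_conjJ hU hJ2, hDJ,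
      Complex.conj_ofReal, map_inv₀, Complex.conj_ofNat]
    linear_combination (norm := module) hε'ℂ • (-(2⁻¹ : ℂ) • (D + P))

theorem commute_lam_of_jSymm_eq_zero (hrho : ∀ a, rho a = conjJ d U (lam (star a)))
    (hU : U ∈ unitaryGroup (Fin d) ℂ) (hJ2 : U * U.map (starRingEnd ℂ) = c • 1)
    {M : Matrix (Fin d) (Fin d) ℂ} (hM : ∀ a, Commute M (rho a)) (h0 : jSymm d U ε' M = 0)
    (a : A) : Commute M (lam a) := by
  rw [eq_neg_of_add_eq_zero_left h0]
  exact ((commute_conjJ_lam hrho hU hJ2 hM a).smul_left _).neg_left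

end jSymm

theorem stmt_12_general {A : Type*} [NormedRing A] [StarRing A]
    [NormedAlgebra ℝ A]
    (d : ℕ) (lam : A →⋆ₐ[ℝ] Matrix (Fin d) (Fin d) ℂ)
    (U : Matrix (Fin d) (Fin d) ℂ) (hU : U ∈ Matrix.unitaryGroup (Fin d) ℂ)
    (ε ε' : ℝ) (hε' : ε' = 1 ∨ ε' = -1)
    (hJ2 : U * U.map (starRingEnd ℂ) = (ε : ℂ) • 1)
    (rho : A → Matrix (Fin d) (Fin d) ℂ)
    (hrho : ∀ a, rho a = conjJ d U (lam (star a)))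
    (horder0 : ∀ a b : A, lam a * rho b = rho b * lam a) :
    (∀ M : Matrix (Fin d) (Fin d) ℂ, Mᴴ = M → (∀ a, M * rho a = rho a * M) →
      (M + (ε' : ℂ) • conjJ d U M)ᴴ = M + (ε' : ℂ) • conjJ d U M ∧
      (∀ a b : A,
        ((M + (ε' : ℂ) • conjJ d U M) * lam a - lam a * (M + (ε' : ℂ) • conjJ d U M)) * rho b
          = rho b *
            ((M + (ε' : ℂ) • conjJ d U M) * lam a - lam a * (M + (ε' : ℂ) • conjJ d U M))) ∧
      conjJ d U (M + (ε' : ℂ) • conjJ d U M) = (ε' : ℂ) • (M + (ε' : ℂ) • conjJ d U M)) ∧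
    (∀ D : Matrix (Fin d) (Fin d) ℂ, Dᴴ = D →
      (∀ a b : A, (D * lam a - lam a * D) * rho b = rho b * (D * lam a - lam a * D)) →
      conjJ d U D = (ε' : ℂ) • D →
      ∃ M : Matrix (Fin d) (Fin d) ℂ, Mᴴ = M ∧ (∀ a, M * rho a = rho a * M) ∧
        D = M + (ε' : ℂ) • conjJ d U M) ∧
    (∀ M : Matrix (Fin d) (Fin d) ℂ, Mᴴ = M → (∀ a, M * rho a = rho a * M) →
      M + (ε' : ℂ) • conjJ d U M = 0 → ∀ a, M * lam a = lam a * M) := by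
  have hε'sq : ε' * ε' = 1 := by rcases hε' with rfl | rfl <;> norm_num
  exact ⟨fun M hM hMr => ⟨isHermitian_jSymm hM, orderOne_jSymm hrho hU hJ2 horder0 hMr,
      conjJ_jSymm hU hJ2 hε'sq M⟩,
    fun _ hD hD1 hDJ => exists_jSymm_eq hrho hU hJ2 hε'sq horder0 hD hD1 hDJ,
    fun _ _ hMr h0 => commute_lam_of_jSymm_eq_zero hrho hU hJ2 hMr h0⟩

/-- for an A-bimodule (λ, ρ(a) = Jλ(a*)J*) with antiunitary J
(modelled by the unitary U, J = U ∘ conj, J² = ε), the map R(M) = M + ε′ J M J* on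
right A-linear self-adjoint operators: (1) produces self-adjoint operators satisfying
the order-one condition and J R(M) = ε′ R(M) J; (2) is onto the set of self-adjoint D
with the order-one condition and DJ = ε′JD; (3) has kernel consisting of operators that
are also left A-linear. -/
theorem stmt_12 {A : Type*} [NormedRing A] [StarRing A] [CStarRing A]
    [NormedAlgebra ℝ A] [FiniteDimensional ℝ A]
    (hsymm : ∀ a : A, IsUnit (1 + star a * a))
    (d : ℕ) (lam : A →⋆ₐ[ℝ] Matrix (Fin d) (Fin d) ℂ)
    (U : Matrix (Fin d) (Fin d) ℂ) (hU : U ∈ Matrix.unitaryGroup (Fin d) ℂ)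
    (ε ε' : ℝ) (hε : ε = 1 ∨ ε = -1) (hε' : ε' = 1 ∨ ε' = -1)
    (hJ2 : U * U.map (starRingEnd ℂ) = (ε : ℂ) • 1)
    (rho : A → Matrix (Fin d) (Fin d) ℂ)
    (hrho : ∀ a, rho a = conjJ d U (lam (star a)))
    (horder0 : ∀ a b : A, lam a * rho b = rho b * lam a) :
    (∀ M : Matrix (Fin d) (Fin d) ℂ, Mᴴ = M → (∀ a, M * rho a = rho a * M) →
      (M + (ε' : ℂ) • conjJ d U M)ᴴ = M + (ε' : ℂ) • conjJ d U M ∧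
      (∀ a b : A,
        ((M + (ε' : ℂ) • conjJ d U M) * lam a - lam a * (M + (ε' : ℂ) • conjJ d U M)) * rho b
          = rho b *
            ((M + (ε' : ℂ) • conjJ d U M) * lam a - lam a * (M + (ε' : ℂ) • conjJ d U M))) ∧
      conjJ d U (M + (ε' : ℂ) • conjJ d U M) = (ε' : ℂ) • (M + (ε' : ℂ) • conjJ d U M)) ∧
    (∀ D : Matrix (Fin d) (Fin d) ℂ, Dᴴ = D →
      (∀ a b : A, (D * lam a - lam a * D) * rho b = rho b * (D * lam a - lam a * D)) →
      conjJ d U D = (ε' : ℂ) • D →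
      ∃ M : Matrix (Fin d) (Fin d) ℂ, Mᴴ = M ∧ (∀ a, M * rho a = rho a * M) ∧
        D = M + (ε' : ℂ) • conjJ d U M) ∧
    (∀ M : Matrix (Fin d) (Fin d) ℂ, Mᴴ = M → (∀ a, M * rho a = rho a * M) →
      M + (ε' : ℂ) • conjJ d U M = 0 → ∀ a, M * lam a = lam a * M) :=
  stmt_12_general d lam U hU ε ε' hε' hJ2 rho hrho horder0
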